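/- Let A be an n×n real symmetric positive definite matrix with integer entries and eigenvalues λ₁ ≥ ⋯ ≥ λ_n > 0. Define relgap(A) = min_{j>i, λ_i ≠ λ_j} (λ_i − λ_j)/λ_j (the minimal relative gap between distinct eigenvalues). Then relgap(A)⁻¹ ≤ 8^n · (4n)^(n²) · (max_{i,j}|A_{ij}|)^(2n²), i.e. relgap(A) ≥ 8^(−n) (4n)^(−n²) (max|A_{ij}|)^(−2n²). -/

import Mathlib

/-!
If `A u = μ u` and `A v = ν v`, then `u ⊗ v` is an eigenvector of the integer matrix
`A ⊗ 1 - 1 ⊗ A` with eigenvalue `μ - ν`. By Gershgorin, every complex eigenvalue of this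
`n² × n²` matrix is bounded by its maximal absolute row sum `2nM`, `M = max |A i j|`, so the
coefficients of its monic integer characteristic polynomial are at most `(1 + 2nM)^(n²)`.
Cauchy's root bound applied to the reversed polynomial, whose leading coefficient is a nonzero
integer, shows that a nonzero root of an integer polynomial with coefficients bounded by `H` has
absolute value greater than `1 / (H + 1)`. Together with `0 < ν ≤ nM` (positive definiteness and
Gershgorin again) this bounds `ν / (μ - ν)`.
-/

/-- The maximum absolute value of the entries of an integer matrix. -/
def maxEntry {m n : ℕ} (A : Matrix (Fin m) (Fin n) ℤ) : ℕ :=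
  (Finset.univ ×ˢ Finset.univ).sup fun p : Fin m × Fin n => (A p.1 p.2).natAbs

open Polynomial Matrix Finset
open scoped Kronecker

namespace Matrix

theorem map_kronecker_one_sub_one_kronecker {m p R S : Type*} [DecidableEq m] [DecidableEq p]
    [CommRing R] [CommRing S] (f : R →+* S) (A : Matrix m m R) (C : Matrix p p R) :
    (A ⊗ₖ (1 : Matrix p p R) - (1 : Matrix m m R) ⊗ₖ C).map f =
      A.map f ⊗ₖ (1 : Matrix p p S) - (1 : Matrix m m S) ⊗ₖ C.map f := by
  ext i j
  simp only [map_apply, sub_apply, kroneckerMap_apply, one_apply]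
  split_ifs <;> simp

variable {l m n p : Type*} [Fintype m] [Fintype p]

theorem kronecker_mulVec_mul {R : Type*} [CommSemiring R] (A : Matrix l m R) (C : Matrix n p R)
    (u : m → R) (v : p → R) :
    (A ⊗ₖ C) *ᵥ (fun q => u q.1 * v q.2) = fun q => (A *ᵥ u) q.1 * (C *ᵥ v) q.2 := by
  ext ⟨i, j⟩
  simp only [mulVec, dotProduct, kroneckerMap_apply, Fintype.sum_prod_type, sum_mul_sum]
  exact sum_congr rfl fun k _ => sum_congr rfl fun k' _ => by ring

theorem kronecker_one_sub_one_kronecker_mulVec [DecidableEq m] [DecidableEq p] {R : Type*}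
    [CommRing R] {A : Matrix m m R} {C : Matrix p p R} {a c : R} {u : m → R} {v : p → R}
    (hu : A *ᵥ u = a • u) (hv : C *ᵥ v = c • v) :
    (A ⊗ₖ (1 : Matrix p p R) - (1 : Matrix m m R) ⊗ₖ C) *ᵥ (fun q => u q.1 * v q.2) =
      (a - c) • fun q => u q.1 * v q.2 := by
  ext q
  simp only [sub_mulVec, kronecker_mulVec_mul, hu, hv, one_mulVec, Pi.sub_apply, Pi.smul_apply,
    smul_eq_mul]
  ring

section Abs

variable {R : Type*} [CommRing R] [LinearOrder R] [IsStrictOrderedRing R]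

theorem sum_abs_kronecker_apply (A : Matrix l m R) (C : Matrix n p R) (i : l × n) :
    ∑ j, |(A ⊗ₖ C) i j| = (∑ k, |A i.1 k|) * ∑ k, |C i.2 k| := by
  simp only [kroneckerMap_apply, abs_mul, Fintype.sum_prod_type, sum_mul_sum]

theorem sum_abs_kronecker_one_sub_one_kronecker_le [DecidableEq m] [DecidableEq p]
    (A : Matrix m m R) (C : Matrix p p R) (i : m × p) :
    ∑ j, |(A ⊗ₖ (1 : Matrix p p R) - (1 : Matrix m m R) ⊗ₖ C) i j| ≤
      ∑ k, |A i.1 k| + ∑ k, |C i.2 k| :=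
  calc _ ≤ ∑ j, (|(A ⊗ₖ (1 : Matrix p p R)) i j| + |((1 : Matrix m m R) ⊗ₖ C) i j|) :=
        sum_le_sum fun j _ => abs_sub _ _
    _ = ∑ k, |A i.1 k| + ∑ k, |C i.2 k| := by
        rw [sum_add_distrib, sum_abs_kronecker_apply, sum_abs_kronecker_apply]
        simp [one_apply, apply_ite]

end Abs

theorem isRoot_charpoly_of_mulVec_eq_smul [DecidableEq m] {K : Type*} [Field K]
    {A : Matrix m m K} {v : m → K} {x : K} (hv : v ≠ 0) (h : A *ᵥ v = x • v) :
    A.charpoly.IsRoot x := by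
  rw [← mem_spectrum_iff_isRoot_charpoly, ← spectrum_toLin']
  exact (Module.End.hasEigenvalue_of_hasEigenvector
    ⟨Module.End.mem_eigenspace_iff.mpr (by rwa [toLin'_apply]), hv⟩).mem_spectrum

theorem isRoot_charpoly_kronecker_one_sub_one_kronecker [DecidableEq m] [DecidableEq p]
    {K : Type*} [Field K] {A : Matrix m m K} {C : Matrix p p K} {a c : K} {u : m → K}
    {v : p → K} (hu0 : u ≠ 0) (hu : A *ᵥ u = a • u) (hv0 : v ≠ 0) (hv : C *ᵥ v = c • v) :
    (A ⊗ₖ (1 : Matrix p p K) - (1 : Matrix m m K) ⊗ₖ C).charpoly.IsRoot (a - c) := by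
  have hw : (fun q : m × p => u q.1 * v q.2) ≠ 0 := by
    obtain ⟨i, hi⟩ := Function.ne_iff.1 hu0
    obtain ⟨j, hj⟩ := Function.ne_iff.1 hv0
    exact Function.ne_iff.2 ⟨(i, j), mul_ne_zero hi hj⟩
  exact isRoot_charpoly_of_mulVec_eq_smul hw (kronecker_one_sub_one_kronecker_mulVec hu hv)

theorem norm_le_of_isRoot_charpoly [DecidableEq m] {K : Type*} [NormedField K]
    {A : Matrix m m K} {x : K} (hx : A.charpoly.IsRoot x) {R : ℝ}
    (hR : ∀ i, ∑ j, ‖A i j‖ ≤ R) : ‖x‖ ≤ R := by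
  have hx' : Module.End.HasEigenvalue (toLin' A) x := by
    rwa [Module.End.hasEigenvalue_iff_mem_spectrum, spectrum_toLin',
      mem_spectrum_iff_isRoot_charpoly]
  obtain ⟨k, hk⟩ := eigenvalue_mem_ball hx'
  rw [mem_closedBall_iff_norm] at hk
  calc ‖x‖ ≤ ‖A k k‖ + ‖x - A k k‖ := norm_le_insert' x (A k k)
    _ ≤ ‖A k k‖ + ∑ j ∈ univ.erase k, ‖A k j‖ := by gcongr
    _ = ∑ j, ‖A k j‖ := add_sum_erase _ (fun j => ‖A k j‖) (mem_univ k)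
    _ ≤ R := hR k

theorem PosDef.pos_of_mulVec_eq_smul {A : Matrix m m ℝ} (hA : A.PosDef) {v : m → ℝ}
    (hv : v ≠ 0) {x : ℝ} (h : A *ᵥ v = x • v) : 0 < x := by
  have := hA.dotProduct_mulVec_pos hv
  rw [h, dotProduct_smul, smul_eq_mul] at this
  exact pos_of_mul_pos_left this (dotProduct_star_self_pos_iff.2 hv).le

theorem abs_charpoly_coeff_le [DecidableEq m] (B : Matrix m m ℤ) {R : ℤ} (hR0 : 0 ≤ R)
    (hR : ∀ i, ∑ j, |B i j| ≤ R) (k : ℕ) :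
    |B.charpoly.coeff k| ≤ (1 + R) ^ Fintype.card m := by
  set d := Fintype.card m
  have hroots : ∀ z ∈ (B.charpoly.map (Int.castRingHom ℂ)).roots, ‖z‖ ≤ R := by
    intro z hz
    rw [← charpoly_map, mem_roots (charpoly_monic _).ne_zero] at hz
    refine norm_le_of_isRoot_charpoly hz fun i => ?_
    simpa [← Int.cast_abs] using (Int.cast_le (R := ℝ)).2 (hR i)
  have h := coeff_le_of_roots_le k B.charpoly_monic (IsAlgClosed.splits _) hroots
  rw [charpoly_natDegree_eq_dim, coeff_map, eq_intCast, Complex.norm_intCast] at h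
  -- `R ^ (d - k) * d.choose k` is one term of the binomial expansion of `(1 + R) ^ d`
  have hterm : (R : ℝ) ^ (d - k) * d.choose k ≤ (1 + R) ^ d := by
    rcases le_or_gt k d with hk | hk
    · rw [add_pow]
      exact le_trans (le_of_eq (by ring))
        (single_le_sum (f := fun j => (1 : ℝ) ^ j * R ^ (d - j) * d.choose j)
          (fun j _ => by positivity) (mem_range.2 (Nat.lt_succ_of_le hk)))
    · rw [Nat.choose_eq_zero_of_lt hk, Nat.cast_zero, mul_zero]
      positivity
  exact_mod_cast h.trans hterm

end Matrix

namespace Polynomial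

theorem inv_abs_lt_of_aeval_eq_zero {q : ℤ[X]} (hq : q ≠ 0) {x : ℝ} (hx : x ≠ 0)
    (hroot : aeval x q = 0) {H : ℤ} (hH : ∀ k, |q.coeff k| ≤ H) : |x|⁻¹ < H + 1 := by
  let := invertibleOfNonzero hx
  set r := q.reverse.map (Int.castRingHom ℝ)
  have hr : r ≠ 0 :=
    (Polynomial.map_ne_zero_iff (RingHom.injective_int _)).2 (reverse_eq_zero.not.2 hq)
  have hrroot : r.IsRoot x⁻¹ := by
    rw [IsRoot, eval_map, ← invOf_eq_inv, eval₂_reverse_eq_zero_iff]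
    simpa [aeval_def] using hroot
  have hH0 : 0 ≤ H := (abs_nonneg _).trans (hH 0)
  have hbound : cauchyBound r ≤ (H : ℝ).toNNReal + 1 := by
    have hcoeff (k : ℕ) : ‖r.coeff k‖₊ ≤ (H : ℝ).toNNReal := by
      rw [← NNReal.coe_le_coe, coe_nnnorm, Real.coe_toNNReal _ (by exact_mod_cast hH0),
        coeff_map, coeff_reverse, eq_intCast, Real.norm_eq_abs, ← Int.cast_abs]
      exact_mod_cast hH _
    have hlead : 1 ≤ ‖r.leadingCoeff‖₊ := by
      rw [leadingCoeff_map_of_injective (RingHom.injective_int _), reverse_leadingCoeff,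
        ← NNReal.coe_le_coe, NNReal.coe_one, coe_nnnorm, eq_intCast, Real.norm_eq_abs,
        ← Int.cast_abs]
      exact_mod_cast Int.one_le_abs (trailingCoeff_nonzero_iff_nonzero.2 hq)
    unfold cauchyBound
    gcongr
    exact (div_le_self bot_le hlead).trans (Finset.sup_le fun k _ => hcoeff k)
  calc |x|⁻¹ = ‖x⁻¹‖₊ := by simp
    _ < cauchyBound r := by exact_mod_cast hrroot.norm_lt_cauchyBound hr
    _ ≤ H + 1 := by
      have := NNReal.coe_le_coe.2 hbound
      rwa [NNReal.coe_add, Real.coe_toNNReal _ (by exact_mod_cast hH0), NNReal.coe_one] at this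

end Polynomial

theorem abs_le_maxEntry {m n : ℕ} (A : Matrix (Fin m) (Fin n) ℤ) (i : Fin m) (j : Fin n) :
    |A i j| ≤ maxEntry A := by
  rw [Int.abs_eq_natAbs, Int.ofNat_le]
  exact le_sup (f := fun p : Fin m × Fin n => (A p.1 p.2).natAbs) (b := (i, j)) (by simp)

theorem sum_abs_le_mul_maxEntry {n : ℕ} (A : Matrix (Fin n) (Fin n) ℤ) (i : Fin n) :
    ∑ j, |A i j| ≤ n * maxEntry A :=
  calc ∑ j, |A i j| ≤ ∑ _j : Fin n, (maxEntry A : ℤ) :=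
        sum_le_sum fun j _ => abs_le_maxEntry A i j
    _ = n * maxEntry A := by simp

theorem abs_le_mul_maxEntry_of_mulVec_eq_smul {n : ℕ} (A : Matrix (Fin n) (Fin n) ℤ)
    {v : Fin n → ℝ} (hv : v ≠ 0) {x : ℝ} (h : A.map (Int.cast : ℤ → ℝ) *ᵥ v = x • v) :
    |x| ≤ n * maxEntry A := by
  refine norm_le_of_isRoot_charpoly (isRoot_charpoly_of_mulVec_eq_smul hv h) fun i => ?_
  simpa [← Int.cast_abs] using (Int.cast_le (R := ℝ)).2 (sum_abs_le_mul_maxEntry A i)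

theorem abs_charpoly_coeff_kronecker_one_sub_one_kronecker_le {n : ℕ}
    (A : Matrix (Fin n) (Fin n) ℤ) (k : ℕ) :
    |(A ⊗ₖ (1 : Matrix (Fin n) (Fin n) ℤ) -
        (1 : Matrix (Fin n) (Fin n) ℤ) ⊗ₖ A).charpoly.coeff k| ≤
      (1 + 2 * n * maxEntry A) ^ (n ^ 2) := by
  have := abs_charpoly_coeff_le _ (R := 2 * n * maxEntry A) (by positivity) (fun i =>
    (sum_abs_kronecker_one_sub_one_kronecker_le A A i).trans
      (by linarith [sum_abs_le_mul_maxEntry A i.1, sum_abs_le_mul_maxEntry A i.2])) k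
  simpa [Fintype.card_prod, sq] using this

theorem mul_one_add_two_mul_pow_sq_add_one_le {n M : ℕ} (hn : 0 < n) (hM : 0 < M) :
    n * M * ((1 + 2 * n * M) ^ (n ^ 2) + 1) ≤ 8 ^ n * (4 * n) ^ (n ^ 2) * M ^ (2 * n ^ 2) := by
  have hpow : (1 + 2 * n * M) ^ (n ^ 2) + 1 ≤ 2 * ((4 * n) ^ (n ^ 2) * M ^ (n ^ 2)) := by
    have hbase : 1 + 2 * n * M ≤ 4 * n * M := by nlinarith
    have hone : 1 ≤ (1 + 2 * n * M) ^ (n ^ 2) := Nat.one_le_pow _ _ (by omega)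
    calc _ ≤ 2 * (1 + 2 * n * M) ^ (n ^ 2) := by omega
      _ ≤ 2 * (4 * n * M) ^ (n ^ 2) := by gcongr
      _ = 2 * ((4 * n) ^ (n ^ 2) * M ^ (n ^ 2)) := by rw [← mul_pow]
  have htwo : 2 * n ≤ 8 ^ n := by
    have := Nat.lt_two_pow_self (n := n)
    have : 2 ≤ 4 ^ n := le_trans (by norm_num) (Nat.pow_le_pow_right (by norm_num) hn)
    calc 2 * n ≤ 4 ^ n * 2 ^ n := by nlinarith
      _ = 8 ^ n := by rw [← mul_pow]; norm_num
  have hM_pow : M ^ (n ^ 2 + 1) ≤ M ^ (2 * n ^ 2) := Nat.pow_le_pow_right hM (by nlinarith)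
  calc _ ≤ n * M * (2 * ((4 * n) ^ (n ^ 2) * M ^ (n ^ 2))) := by gcongr
    _ = 2 * n * (4 * n) ^ (n ^ 2) * M ^ (n ^ 2 + 1) := by ring
    _ ≤ 8 ^ n * (4 * n) ^ (n ^ 2) * M ^ (2 * n ^ 2) := by gcongr

theorem stmt14_general {n : ℕ} (A : Matrix (Fin n) (Fin n) ℤ)
    (hpd : (A.map (Int.cast : ℤ → ℝ)).PosDef) (mu nu : ℝ)
    (hmu : ∃ v : Fin n → ℝ, v ≠ 0 ∧ (A.map (Int.cast : ℤ → ℝ)).mulVec v = mu • v)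
    (hnu : ∃ v : Fin n → ℝ, v ≠ 0 ∧ (A.map (Int.cast : ℤ → ℝ)).mulVec v = nu • v)
    (hlt : nu < mu) :
    (mu - nu) / nu ≥
      ((8 : ℝ) ^ n * (4 * (n : ℝ)) ^ (n ^ 2) * (maxEntry A : ℝ) ^ (2 * n ^ 2))⁻¹ := by
  obtain ⟨u, hu0, hu⟩ := hmu
  obtain ⟨v, hv0, hv⟩ := hnu
  set M := maxEntry A
  have hnu_pos : 0 < nu := hpd.pos_of_mulVec_eq_smul hv0 hv
  have hnu_le : nu ≤ n * M :=
    (le_abs_self nu).trans (abs_le_mul_maxEntry_of_mulVec_eq_smul A hv0 hv)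
  obtain ⟨hn, hM⟩ : 0 < n ∧ 0 < M :=
    CanonicallyOrderedAdd.mul_pos.1 (by exact_mod_cast hnu_pos.trans_le hnu_le)
  have hroot : aeval (mu - nu) (A ⊗ₖ (1 : Matrix (Fin n) (Fin n) ℤ) -
      (1 : Matrix (Fin n) (Fin n) ℤ) ⊗ₖ A).charpoly = 0 := by
    rw [aeval_def, ← eval_map, ← charpoly_map, map_kronecker_one_sub_one_kronecker]
    exact isRoot_charpoly_kronecker_one_sub_one_kronecker hu0 hu hv0 hv
  have hgap := inv_abs_lt_of_aeval_eq_zero (charpoly_monic _).ne_zero (sub_ne_zero.2 hlt.ne')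
    hroot (abs_charpoly_coeff_kronecker_one_sub_one_kronecker_le A)
  rw [abs_of_pos (sub_pos.2 hlt)] at hgap
  refine inv_le_of_inv_le₀ (div_pos (sub_pos.2 hlt) hnu_pos) ?_
  calc ((mu - nu) / nu)⁻¹ = nu * (mu - nu)⁻¹ := by rw [inv_div, div_eq_mul_inv]
    _ ≤ n * M * ((1 + 2 * n * M) ^ (n ^ 2) + 1) := by
      gcongr
      exact_mod_cast hgap.le
    _ ≤ _ := by exact_mod_cast mul_one_add_two_mul_pow_sq_add_one_le hn hM

/-- Let `A` be an `n × n` symmetric positive definite integer matrix.  Any two distinct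
eigenvalues `ν < μ` of `A` satisfy `(μ - ν)/ν ≥ 8^(-n) (4n)^(-n²) (max |A i j|)^(-2n²)`;
that is, the minimal relative gap `relgap(A)` between distinct eigenvalues satisfies
`relgap(A)⁻¹ ≤ 8^n (4n)^(n²) (max |A i j|)^(2n²)`. -/
theorem stmt14 {n : ℕ} (A : Matrix (Fin n) (Fin n) ℤ) (hsym : A.IsSymm)
    (hpd : (A.map (Int.cast : ℤ → ℝ)).PosDef) (mu nu : ℝ)
    (hmu : ∃ v : Fin n → ℝ, v ≠ 0 ∧ (A.map (Int.cast : ℤ → ℝ)).mulVec v = mu • v)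
    (hnu : ∃ v : Fin n → ℝ, v ≠ 0 ∧ (A.map (Int.cast : ℤ → ℝ)).mulVec v = nu • v)
    (hlt : nu < mu) :
    (mu - nu) / nu ≥
      ((8 : ℝ) ^ n * (4 * (n : ℝ)) ^ (n ^ 2) * (maxEntry A : ℝ) ^ (2 * n ^ 2))⁻¹ :=
  stmt14_general A hpd mu nu hmu hnu hlt
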